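/- arXiv:1003.2512 — 4 statements merged into one kernel-verified Lean document; each statement's English description precedes it below -/
import Mathlib

section
/- Let H be a free abelian group of finite rank, let L = Lie(H) be the free Lie ring on H with canonical map ι : H → L, and let β : H ⊗ Λ²H → L be the homomorphism of abelian groups determined by x ⊗ (y ∧ z) ↦ [ι(x), [ι(y), ι(z)]]. Then the homomorphism j : Λ³H → H ⊗ Λ²H determined by a ∧ b ∧ c ↦ a ⊗ (b ∧ c) + c ⊗ (a ∧ b) + b ⊗ (c ∧ a) is injective, and its image is exactly the kernel of β. (This is the identification Λ³H ≅ D₃(H) of the target of the first Johnson homomorphism, where D₃(H) is the kernel of the bracket map H ⊗ Lie₂(H) → Lie₃(H).) -/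
/-!
Let `J ⊆ H ⊗ Λ²H` be the span of the Jacobiators `a ⊗ (b ∧ c) + c ⊗ (a ∧ b) + b ⊗ (c ∧ a)`;
it is the image of `j`, since wedges span `Λ³H`, and the Jacobi identity puts it in `ker β`.
Conversely `H ⊕ Λ²H ⊕ (H ⊗ Λ²H)/J` is a Lie ring, so the inclusion of `H` extends to a Lie map
from the free Lie ring, and this map sends `β t` to the class of `t` modulo `J`.
Finally, multiplication `H ⊗ Λ²H → Λ³H` sends `j ω` to `3 ω`, and `Λ³H` is torsion free
because `H` is free, so `j` is injective.
-/

open scoped TensorProduct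

universe u

/-- The wedge product of a family of `n` vectors, as an element of the `n`-th exterior power
`⋀[R]^n M`. -/
noncomputable def wedgeMk (R : Type*) (M : Type*) [CommRing R] [AddCommGroup M] [Module R M]
    (n : ℕ) (v : Fin n → M) : ⋀[R]^n M :=
  ⟨ExteriorAlgebra.ιMulti R n v, ExteriorAlgebra.ιMulti_range R n ⟨v, rfl⟩⟩

namespace LieDegreeThree

section ExteriorAlgebra

variable {R M : Type*} [CommRing R] [AddCommGroup M] [Module R M]

open ExteriorAlgebra

lemma ι_mul_ι_anticomm (x y : M) : ι R x * ι R y = -(ι R y * ι R x) :=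
  eq_neg_of_add_eq_zero_left (ι_add_mul_swap x y)

lemma ι_commute_ι_mul_ι (x y z : M) : Commute (ι R z) (ι R x * ι R y) := by
  rw [Commute, SemiconjBy, ← mul_assoc, ι_mul_ι_anticomm z x, neg_mul, mul_assoc,
    ι_mul_ι_anticomm z y, mul_neg, neg_neg, mul_assoc]

lemma coe_wedgeMk_two (y z : M) :
    (wedgeMk R M 2 ![y, z] : ExteriorAlgebra R M) = ι R y * ι R z := by
  simp [wedgeMk, ιMulti_apply]

lemma coe_wedgeMk_three (a b c : M) :
    (wedgeMk R M 3 ![a, b, c] : ExteriorAlgebra R M) = ι R a * ι R b * ι R c := by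
  simp [wedgeMk, ιMulti_apply, mul_assoc]

variable (R M) in
lemma span_range_wedgeMk (n : ℕ) : Submodule.span R (Set.range (wedgeMk R M n)) = ⊤ :=
  exteriorPower.ιMulti_span R n M

variable (R M) in
noncomputable def wedge₂ : M →ₗ[R] M →ₗ[R] ⋀[R]^2 M :=
  LinearMap.mk₂ R (fun y z => wedgeMk R M 2 ![y, z])
    (fun _ _ _ => Subtype.ext <| by
      simp only [Submodule.coe_add, coe_wedgeMk_two, map_add, add_mul])
    (fun _ _ _ => Subtype.ext <| by
      simp only [SetLike.val_smul, coe_wedgeMk_two, map_smul, smul_mul_assoc])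
    (fun _ _ _ => Subtype.ext <| by
      simp only [Submodule.coe_add, coe_wedgeMk_two, map_add, mul_add])
    (fun _ _ _ => Subtype.ext <| by
      simp only [SetLike.val_smul, coe_wedgeMk_two, map_smul, mul_smul_comm])

lemma wedge₂_apply (y z : M) : wedge₂ R M y z = wedgeMk R M 2 ![y, z] := rfl

lemma wedge₂_self (x : M) : wedge₂ R M x x = 0 :=
  Subtype.ext <| by simp [wedge₂_apply, coe_wedgeMk_two]

lemma wedge₂_swap (x y : M) : wedge₂ R M y x = -wedge₂ R M x y :=
  Subtype.ext <| by simp [wedge₂_apply, coe_wedgeMk_two, ι_mul_ι_anticomm y x]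

end ExteriorAlgebra

variable {H : Type u} [AddCommGroup H]

local notation "ιE" => ExteriorAlgebra.ι ℤ (M := H)

noncomputable def jacobiator (a b c : H) : H ⊗[ℤ] ⋀[ℤ]^2 H :=
  a ⊗ₜ wedge₂ ℤ H b c + c ⊗ₜ wedge₂ ℤ H a b + b ⊗ₜ wedge₂ ℤ H c a

variable (H) in
def jacobiSubmodule : Submodule ℤ (H ⊗[ℤ] ⋀[ℤ]^2 H) :=
  Submodule.span ℤ (Set.range fun v : Fin 3 → H => jacobiator (v 0) (v 1) (v 2))

lemma mkQ_jacobiator (a b c : H) : (jacobiSubmodule H).mkQ (jacobiator a b c) = 0 :=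
  (Submodule.Quotient.mk_eq_zero _).mpr (Submodule.subset_span ⟨![a, b, c], rfl⟩)

variable (H) in
abbrev TruncLie : Type u := H × ⋀[ℤ]^2 H × ((H ⊗[ℤ] ⋀[ℤ]^2 H) ⧸ jacobiSubmodule H)

noncomputable instance : Bracket (TruncLie H) (TruncLie H) where
  bracket p q := (0, wedge₂ ℤ H p.1 q.1, (jacobiSubmodule H).mkQ (p.1 ⊗ₜ q.2.1 - q.1 ⊗ₜ p.2.1))

lemma truncLie_bracket_def (p q : TruncLie H) :
    ⁅p, q⁆ = (0, wedge₂ ℤ H p.1 q.1, (jacobiSubmodule H).mkQ (p.1 ⊗ₜ q.2.1 - q.1 ⊗ₜ p.2.1)) :=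
  rfl

-- The Leibniz rule in degree three is exactly the vanishing of the Jacobiators.
noncomputable instance : LieRing (TruncLie H) where
  add_lie p q r := by
    simp only [truncLie_bracket_def, Prod.fst_add, Prod.snd_add, map_add, LinearMap.add_apply,
      TensorProduct.add_tmul, TensorProduct.tmul_add, Prod.mk_add_mk, add_zero]
    congr 2
    rw [← map_add]
    congr 1
    abel
  lie_add p q r := by
    simp only [truncLie_bracket_def, Prod.fst_add, Prod.snd_add, map_add,
      TensorProduct.add_tmul, TensorProduct.tmul_add, Prod.mk_add_mk, add_zero]
    congr 2
    rw [← map_add]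
    congr 1
    abel
  lie_self p := by simp [truncLie_bracket_def, wedge₂_self]
  leibniz_lie p q r := by
    have hjac := mkQ_jacobiator p.1 q.1 r.1
    rw [jacobiator, wedge₂_swap p.1 r.1, TensorProduct.tmul_neg, map_add, map_add, map_neg]
      at hjac
    simp only [truncLie_bracket_def, map_zero, LinearMap.zero_apply, TensorProduct.zero_tmul,
      sub_zero, zero_sub, map_neg, Prod.mk_add_mk, add_zero]
    congr 2
    rw [← sub_eq_zero, ← hjac]
    abel

lemma jacobiSubmodule_le_ker {L : Type*} [LieRing L] (ι : H →ₗ[ℤ] L)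
    (β : H ⊗[ℤ] ⋀[ℤ]^2 H →ₗ[ℤ] L)
    (hβ : ∀ x y z : H, β (x ⊗ₜ[ℤ] wedgeMk ℤ H 2 ![y, z]) = ⁅ι x, ⁅ι y, ι z⁆⁆) :
    jacobiSubmodule H ≤ LinearMap.ker β := by
  rw [jacobiSubmodule, Submodule.span_le]
  rintro _ ⟨v, rfl⟩
  simp only [SetLike.mem_coe, LinearMap.mem_ker, jacobiator, map_add, wedge₂_apply, hβ]
  rw [← lie_jacobi (ι (v 0)) (ι (v 1)) (ι (v 2))]
  abel

lemma ker_le_jacobiSubmodule {L : Type*} [LieRing L] (ι : H →ₗ[ℤ] L)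
    (F : L →ₗ⁅ℤ⁆ TruncLie H) (hF : ∀ h : H, F (ι h) = (h, 0, 0))
    (β : H ⊗[ℤ] ⋀[ℤ]^2 H →ₗ[ℤ] L)
    (hβ : ∀ x y z : H, β (x ⊗ₜ[ℤ] wedgeMk ℤ H 2 ![y, z]) = ⁅ι x, ⁅ι y, ι z⁆⁆) :
    LinearMap.ker β ≤ jacobiSubmodule H := by
  have hFβ : (LinearMap.snd ℤ _ _ ∘ₗ LinearMap.snd ℤ _ _) ∘ₗ F.toLinearMap ∘ₗ β =
      (jacobiSubmodule H).mkQ := by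
    refine TensorProduct.ext (LinearMap.ext fun x =>
      LinearMap.ext_on_range (span_range_wedgeMk ℤ H 2) fun v => ?_)
    rw [show v = ![v 0, v 1] from List.ofFn_inj.mp rfl]
    -- The `ℤ`-module structure of the tensor product in `β`'s type is `AddCommGroup.toIntModule`,
    -- which `simp` does not identify with `TensorProduct.instModule`.
    show (F (β (x ⊗ₜ wedgeMk ℤ H 2 ![v 0, v 1]))).2.2 = (jacobiSubmodule H).mkQ (x ⊗ₜ _)
    simp [hβ, hF, truncLie_bracket_def, wedge₂_apply]
  intro t ht
  rw [← Submodule.Quotient.mk_eq_zero, ← Submodule.mkQ_apply, ← hFβ]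
  simp [LinearMap.mem_ker.mp ht]

lemma range_eq_jacobiSubmodule (j : ⋀[ℤ]^3 H →ₗ[ℤ] H ⊗[ℤ] ⋀[ℤ]^2 H)
    (hj : ∀ a b c : H, j (wedgeMk ℤ H 3 ![a, b, c]) = jacobiator a b c) :
    LinearMap.range j = jacobiSubmodule H := by
  rw [LinearMap.range_eq_map, ← span_range_wedgeMk ℤ H 3, Submodule.map_span,
    ← Set.range_comp, jacobiSubmodule]
  congr 2
  funext v
  rw [Function.comp_apply, ← hj, ← show v = ![v 0, v 1, v 2] from List.ofFn_inj.mp rfl]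

variable (H) in
noncomputable def wedgeMul : H ⊗[ℤ] ⋀[ℤ]^2 H →ₗ[ℤ] ExteriorAlgebra ℤ H :=
  TensorProduct.lift ((LinearMap.mul ℤ _ ∘ₗ ExteriorAlgebra.ι ℤ).compl₂ (⋀[ℤ]^2 H).subtype)

lemma wedgeMul_tmul (x : H) (ω : ⋀[ℤ]^2 H) : wedgeMul H (x ⊗ₜ ω) = ιE x * ω := rfl

lemma wedgeMul_jacobiator (a b c : H) :
    wedgeMul H (jacobiator a b c) = (3 : ℤ) • (ιE a * ιE b * ιE c) := by
  simp only [jacobiator, map_add, wedgeMul_tmul, wedge₂_apply, coe_wedgeMk_two]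
  rw [(ι_commute_ι_mul_ι c a b).eq, mul_assoc (ιE c), (ι_commute_ι_mul_ι a b c).eq,
    ← mul_assoc (ιE a)]
  abel

lemma injective_of_map_wedgeMk_eq_jacobiator [Module.Free ℤ H]
    (j : ⋀[ℤ]^3 H →ₗ[ℤ] H ⊗[ℤ] ⋀[ℤ]^2 H)
    (hj : ∀ a b c : H, j (wedgeMk ℤ H 3 ![a, b, c]) = jacobiator a b c) :
    Function.Injective j := by
  have hmul (x : ⋀[ℤ]^3 H) : wedgeMul H (j x) = (3 : ℤ) • (x : ExteriorAlgebra ℤ H) := by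
    refine LinearMap.congr_fun (?_ : wedgeMul H ∘ₗ j = (3 : ℤ) • (⋀[ℤ]^3 H).subtype) x
    refine LinearMap.ext_on_range (span_range_wedgeMk ℤ H 3) fun v => ?_
    rw [show v = ![v 0, v 1, v 2] from List.ofFn_inj.mp rfl]
    simp [hj, wedgeMul_jacobiator, coe_wedgeMk_three]
  intro x y hxy
  apply smul_right_injective (⋀[ℤ]^3 H) (three_ne_zero : (3 : ℤ) ≠ 0)
  exact Subtype.ext <| by rw [SetLike.val_smul, SetLike.val_smul, ← hmul, ← hmul, hxy]

end LieDegreeThree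

theorem stmt_0_general (H : Type u) [AddCommGroup H] [Module.Free ℤ H]
    (L : Type u) [LieRing L] (ι : H →ₗ[ℤ] L)
    (hL : ∀ (L' : Type u) [LieRing L'] (f : H →ₗ[ℤ] L'),
      ∃! F : L →ₗ⁅ℤ⁆ L', ∀ h : H, F (ι h) = f h)
    (β : (H ⊗[ℤ] ↥(⋀[ℤ]^2 H)) →ₗ[ℤ] L)
    (hβ : ∀ x y z : H, β (x ⊗ₜ[ℤ] wedgeMk ℤ H 2 ![y, z]) = ⁅ι x, ⁅ι y, ι z⁆⁆)
    (j : ↥(⋀[ℤ]^3 H) →ₗ[ℤ] (H ⊗[ℤ] ↥(⋀[ℤ]^2 H)))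
    (hj : ∀ a b c : H, j (wedgeMk ℤ H 3 ![a, b, c]) =
        a ⊗ₜ[ℤ] wedgeMk ℤ H 2 ![b, c] + c ⊗ₜ[ℤ] wedgeMk ℤ H 2 ![a, b]
          + b ⊗ₜ[ℤ] wedgeMk ℤ H 2 ![c, a]) :
    Function.Injective j ∧ LinearMap.range j = LinearMap.ker β := by
  obtain ⟨F, hF, -⟩ := hL (LieDegreeThree.TruncLie H) (LinearMap.inl ℤ H _)
  refine ⟨LieDegreeThree.injective_of_map_wedgeMk_eq_jacobiator j hj, ?_⟩
  rw [LieDegreeThree.range_eq_jacobiSubmodule j hj]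
  exact le_antisymm (LieDegreeThree.jacobiSubmodule_le_ker ι β hβ)
    (LieDegreeThree.ker_le_jacobiSubmodule ι F hF β hβ)

/-- Let `H` be a free abelian group of finite rank, let `L` (together with the canonical map
`ι : H → L`) be the free Lie ring on `H`, and let `β : H ⊗ Λ²H → L` be the additive map
determined by `x ⊗ (y ∧ z) ↦ [ι x, [ι y, ι z]]`.  Then the additive map `j : Λ³H → H ⊗ Λ²H`
determined by `a ∧ b ∧ c ↦ a ⊗ (b ∧ c) + c ⊗ (a ∧ b) + b ⊗ (c ∧ a)` is injective, and its image
is exactly the kernel of `β`. -/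
theorem stmt_0 (H : Type u) [AddCommGroup H] [Module.Free ℤ H] [Module.Finite ℤ H]
    (L : Type u) [LieRing L] (ι : H →ₗ[ℤ] L)
    (hL : ∀ (L' : Type u) [LieRing L'] (f : H →ₗ[ℤ] L'),
      ∃! F : L →ₗ⁅ℤ⁆ L', ∀ h : H, F (ι h) = f h)
    (β : (H ⊗[ℤ] ↥(⋀[ℤ]^2 H)) →ₗ[ℤ] L)
    (hβ : ∀ x y z : H, β (x ⊗ₜ[ℤ] wedgeMk ℤ H 2 ![y, z]) = ⁅ι x, ⁅ι y, ι z⁆⁆)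
    (j : ↥(⋀[ℤ]^3 H) →ₗ[ℤ] (H ⊗[ℤ] ↥(⋀[ℤ]^2 H)))
    (hj : ∀ a b c : H, j (wedgeMk ℤ H 3 ![a, b, c]) =
        a ⊗ₜ[ℤ] wedgeMk ℤ H 2 ![b, c] + c ⊗ₜ[ℤ] wedgeMk ℤ H 2 ![a, b]
          + b ⊗ₜ[ℤ] wedgeMk ℤ H 2 ![c, a]) :
    Function.Injective j ∧ LinearMap.range j = LinearMap.ker β :=
  stmt_0_general H L ι hL β hβ j hj
end

section
/- Let G be a group and k ≥ 1. Set Q = G/Γ_{k+2}G. The image of Γ_{k+1}G in Q equals the (k+1)-st lower central subgroup Γ_{k+1}Q, so every automorphism of Q induces an automorphism of Q/Γ_{k+1}Q ≅ G/Γ_{k+1}G, giving a natural group homomorphism r : Aut(G/Γ_{k+2}G) → Aut(G/Γ_{k+1}G). The kernel of r is an abelian subgroup of Aut(G/Γ_{k+2}G), and the map Ψ ↦ (class of x ↦ Ψ({x})·{x}⁻¹) is a group isomorphism from ker(r) onto the group of homomorphisms G/Γ₂G → Γ_{k+1}G/Γ_{k+2}G. -/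
/-!
Write `Q = G ⧸ Γ_{k+2}G` and `A` for the image of `Γ_{k+1}G`, which is `Γ_{k+1}Q`. Since
`[A, Q] = Γ_{k+2}Q = 1`, `A` is central, and since `k ≥ 1`, `A ≤ [Q, Q]`. If `Ψ` acts trivially
on `Q ⧸ A`, centrality makes its displacement `q ↦ Ψ q * q⁻¹` a homomorphism `Q →* A`. Any
homomorphism into the abelian group `A` kills `[Q, Q] ⊇ A`; hence `Ψ` fixes `A` pointwise, which
makes the displacement of `Ψ * Φ` the product of the displacements, and `f ↦ (q ↦ f q * q)`
inverts the construction. Finally `Γ_{k+2}G ≤ [G, G]`, so homomorphisms `Q →* A` are the same as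
homomorphisms `G ⧸ [G, G] →* A`.
-/

open Subgroup

section LowerCentralSeries

variable {G H : Type*} [Group G] [Group H]

theorem Subgroup.map_top_lowerCentralSeries_of_surjective {f : G →* H}
    (hf : Function.Surjective f) (n : ℕ) :
    ((⊤ : Subgroup G).lowerCentralSeries n).map f = (⊤ : Subgroup H).lowerCentralSeries n := by
  rw [map_lowerCentralSeries, map_top_of_surjective f hf]

theorem Subgroup.top_lowerCentralSeries_quotient (n : ℕ) :
    (⊤ : Subgroup (G ⧸ (⊤ : Subgroup G).lowerCentralSeries n)).lowerCentralSeries n = ⊥ := by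
  rw [← map_top_lowerCentralSeries_of_surjective (QuotientGroup.mk'_surjective _),
    map_eq_bot_iff, QuotientGroup.ker_mk']

theorem MonoidHom.commutator_le_ker_of_le_center {L : Subgroup H} (hL : L ≤ center H)
    (f : G →* L) : commutator G ≤ f.ker := by
  rw [commutator_def, commutator_le]
  intro a _ b _
  rw [MonoidHom.mem_ker, map_commutatorElement, commutatorElement_eq_one_iff_mul_comm]
  exact Subtype.ext (mem_center_iff.mp (hL (f b).2) (f a))

theorem MonoidHom.apply_eq_one_of_le_commutator {L : Subgroup H} (hL : L ≤ center H)
    (hLc : L ≤ commutator H) (f : H →* L) {l : H} (hl : l ∈ L) : f l = 1 :=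
  f.commutator_le_ker_of_le_center hL (hLc hl)

end LowerCentralSeries

namespace MulAut

variable {Q : Type*} [Group Q]

def fixQuotient (L : Subgroup Q) : Subgroup (MulAut Q) where
  carrier := {Ψ | ∀ q, Ψ q * q⁻¹ ∈ L}
  mul_mem' {Ψ Φ} hΨ hΦ q := by
    simpa [mul_assoc] using L.mul_mem (hΨ (Φ q)) (hΦ q)
  one_mem' q := by simp
  inv_mem' {Ψ} hΨ q := by
    simpa using L.inv_mem (hΨ (Ψ⁻¹ q))

theorem mem_fixQuotient {L : Subgroup Q} {Ψ : MulAut Q} :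
    Ψ ∈ fixQuotient L ↔ ∀ q, Ψ q * q⁻¹ ∈ L :=
  Iff.rfl

def quotient (L : Subgroup Q) [L.Characteristic] : MulAut Q →* MulAut (Q ⧸ L) where
  toFun Ψ := QuotientGroup.congr L L Ψ (Subgroup.characteristic_iff_map_eq.mp ‹_› Ψ)
  map_one' := MulEquiv.ext fun x => QuotientGroup.induction_on x fun _ => rfl
  map_mul' _ _ := MulEquiv.ext fun x => QuotientGroup.induction_on x fun _ => rfl

section Characteristic

variable {L : Subgroup Q} [L.Characteristic]

@[simp]
theorem quotient_apply_mk (Ψ : MulAut Q) (q : Q) :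
    quotient L Ψ (q : Q ⧸ L) = (Ψ q : Q ⧸ L) :=
  rfl

theorem eq_quotient {r : MulAut Q →* MulAut (Q ⧸ L)}
    (hr : ∀ Ψ q, r Ψ (QuotientGroup.mk q) = QuotientGroup.mk (Ψ q)) : r = quotient L :=
  MonoidHom.ext fun Ψ => MulEquiv.ext fun x => QuotientGroup.induction_on x (hr Ψ)

theorem ker_quotient : (quotient L).ker = fixQuotient L := by
  ext Ψ
  simp only [MonoidHom.mem_ker, mem_fixQuotient, MulEquiv.ext_iff, MulAut.one_apply]
  have mk_eq_iff (q : Q) : quotient L Ψ q = q ↔ Ψ q * q⁻¹ ∈ L := by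
    rw [quotient_apply_mk, QuotientGroup.eq_iff_div_mem, div_eq_mul_inv]
  exact ⟨fun h q => (mk_eq_iff q).mp (h q),
    fun h x => QuotientGroup.induction_on x fun q => (mk_eq_iff q).mpr (h q)⟩

end Characteristic

section Central

variable {L : Subgroup Q} (hL : L ≤ center Q)
include hL

def displacement (Ψ : fixQuotient L) : Q →* L where
  toFun q := ⟨Ψ.1 q * q⁻¹, Ψ.2 q⟩
  map_one' := by simp
  map_mul' x y := Subtype.ext <| by
    have hcomm : x⁻¹ * (Ψ.1 y * y⁻¹) = Ψ.1 y * y⁻¹ * x⁻¹ := mem_center_iff.mp (hL (Ψ.2 y)) x⁻¹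
    simp only [map_mul, mul_inv_rev, Subgroup.coe_mul]
    calc Ψ.1 x * Ψ.1 y * (y⁻¹ * x⁻¹) = Ψ.1 x * (Ψ.1 y * y⁻¹ * x⁻¹) := by group
      _ = Ψ.1 x * x⁻¹ * (Ψ.1 y * y⁻¹) := by rw [← hcomm]; group

@[simp]
theorem coe_displacement_apply (Ψ : fixQuotient L) (q : Q) :
    (displacement hL Ψ q : Q) = Ψ.1 q * q⁻¹ :=
  rfl

theorem displacement_mul_self (Ψ : fixQuotient L) (q : Q) :
    (displacement hL Ψ q : Q) * q = Ψ.1 q := by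
  simp

variable (hLc : L ≤ commutator Q)
include hLc

theorem apply_eq_self_of_mem (Ψ : fixQuotient L) {l : Q} (hl : l ∈ L) : Ψ.1 l = l := by
  rw [← displacement_mul_self hL Ψ l,
    (displacement hL Ψ).apply_eq_one_of_le_commutator hL hLc hl, OneMemClass.coe_one, one_mul]

def ofHom (f : Q →* L) : MulAut Q where
  toFun q := f q * q
  invFun q := (f q : Q)⁻¹ * q
  left_inv q := by
    simp [f.apply_eq_one_of_le_commutator hL hLc (f q).2]
  right_inv q := by
    simp [f.apply_eq_one_of_le_commutator hL hLc (f q).2]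
  map_mul' x y := by
    have hcomm : x * f y = f y * x := mem_center_iff.mp (hL (f y).2) x
    simp only [map_mul, Subgroup.coe_mul]
    calc (f x : Q) * f y * (x * y) = f x * (f y * x) * y := by group
      _ = f x * x * (f y * y) := by rw [← hcomm]; group

theorem ofHom_mem_fixQuotient (f : Q →* L) : ofHom hL hLc f ∈ fixQuotient L := fun q => by
  simp [ofHom]

def fixQuotientEquivHom : fixQuotient L ≃ (Q →* L) where
  toFun := displacement hL
  invFun f := ⟨ofHom hL hLc f, ofHom_mem_fixQuotient hL hLc f⟩
  left_inv Ψ := Subtype.ext <| MulEquiv.ext fun q => displacement_mul_self hL Ψ q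
  right_inv f := MonoidHom.ext fun q => Subtype.ext <| by simp [ofHom]

theorem displacement_mul (Ψ Φ : fixQuotient L) (q : Q) :
    displacement hL (Ψ * Φ) q = displacement hL Ψ q * displacement hL Φ q := by
  set dΨ := displacement hL Ψ q
  set dΦ := displacement hL Φ q
  have hcomm : (dΨ : Q) * dΦ = dΦ * dΨ := mem_center_iff.mp (hL dΦ.2) dΨ
  apply Subtype.ext
  calc Ψ.1 (Φ.1 q) * q⁻¹ = Ψ.1 (dΦ * q) * q⁻¹ := by rw [displacement_mul_self]
    _ = dΦ * dΨ := by rw [map_mul, apply_eq_self_of_mem hL hLc Ψ dΦ.2, mul_assoc]; rfl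
    _ = dΨ * dΦ := hcomm.symm

theorem mul_comm_of_mem_fixQuotient {Ψ Φ : MulAut Q} (hΨ : Ψ ∈ fixQuotient L)
    (hΦ : Φ ∈ fixQuotient L) : Ψ * Φ = Φ * Ψ := by
  have hdisp : displacement hL (⟨Ψ, hΨ⟩ * ⟨Φ, hΦ⟩) = displacement hL (⟨Φ, hΦ⟩ * ⟨Ψ, hΨ⟩) :=
    MonoidHom.ext fun q => by
      rw [displacement_mul hL hLc, displacement_mul hL hLc]
      exact Subtype.ext (mem_center_iff.mp (hL (displacement hL ⟨Φ, hΦ⟩ q).2) _)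
  exact congrArg Subtype.val ((fixQuotientEquivHom hL hLc).injective hdisp)

end Central

end MulAut

namespace QuotientGroup

variable {G P : Type*} [Group G] [Group P] {L : Subgroup P} (hL : L ≤ center P)
  {N C : Subgroup G} [N.Normal] [C.Normal] (hNC : N ≤ C) (hC : C ≤ commutator G)

def homEquivOfLeCommutator : (G ⧸ N →* L) ≃ (G ⧸ C →* L) where
  toFun f := lift C (f.comp (mk' N)) fun _ hg =>
    (f.comp (mk' N)).commutator_le_ker_of_le_center hL (hC hg)
  invFun f := f.comp (map N C (MonoidHom.id G) hNC)
  left_inv _ := monoidHom_ext _ rfl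
  right_inv _ := monoidHom_ext _ rfl

end QuotientGroup

/-- Let `G` be a group and `k ≥ 1`.  Set `Q = G/Γ_{k+2}G` (here `Γ_{i+1}G` is
`lowerCentralSeries G i`).  Then the image of `Γ_{k+1}G` in `Q` equals `Γ_{k+1}Q`, so there is
a (unique) natural group homomorphism `r : Aut(Q) → Aut(Q/Γ_{k+1}Q)` compatible with the
projection.  The kernel of `r` is an abelian subgroup of `Aut(Q)`, and `Ψ ↦ (class of
`x ↦ Ψ(x)·x⁻¹`)` is a group isomorphism from `ker r` onto the group of homomorphisms
`G/Γ₂G → Γ_{k+1}G/Γ_{k+2}G` (the latter group being identified with the image `A` of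
`Γ_{k+1}G` in `Q`). -/
theorem stmt_6 (G : Type*) [Group G] (k : ℕ) (hk : 1 ≤ k) :
    Subgroup.map (QuotientGroup.mk' ((⊤ : Subgroup G).lowerCentralSeries (k + 1))) ((⊤ : Subgroup G).lowerCentralSeries k)
      = (⊤ : Subgroup (G ⧸ (⊤ : Subgroup G).lowerCentralSeries (k + 1))).lowerCentralSeries k ∧
    (∃! r : MulAut (G ⧸ (⊤ : Subgroup G).lowerCentralSeries (k + 1)) →*
        MulAut ((G ⧸ (⊤ : Subgroup G).lowerCentralSeries (k + 1)) ⧸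
          (⊤ : Subgroup (G ⧸ (⊤ : Subgroup G).lowerCentralSeries (k + 1))).lowerCentralSeries k),
      ∀ (Ψ : MulAut (G ⧸ (⊤ : Subgroup G).lowerCentralSeries (k + 1)))
        (q : G ⧸ (⊤ : Subgroup G).lowerCentralSeries (k + 1)),
          r Ψ (QuotientGroup.mk q) = QuotientGroup.mk (Ψ q)) ∧
    (∀ r : MulAut (G ⧸ (⊤ : Subgroup G).lowerCentralSeries (k + 1)) →*
        MulAut ((G ⧸ (⊤ : Subgroup G).lowerCentralSeries (k + 1)) ⧸
          (⊤ : Subgroup (G ⧸ (⊤ : Subgroup G).lowerCentralSeries (k + 1))).lowerCentralSeries k),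
      (∀ (Ψ : MulAut (G ⧸ (⊤ : Subgroup G).lowerCentralSeries (k + 1)))
        (q : G ⧸ (⊤ : Subgroup G).lowerCentralSeries (k + 1)),
          r Ψ (QuotientGroup.mk q) = QuotientGroup.mk (Ψ q)) →
      ((∀ a b : MulAut (G ⧸ (⊤ : Subgroup G).lowerCentralSeries (k + 1)),
          a ∈ r.ker → b ∈ r.ker → a * b = b * a) ∧
       ∃ θ : r.ker ≃ ((G ⧸ (⊤ : Subgroup G).lowerCentralSeries 1) →*
            ↥(Subgroup.map (QuotientGroup.mk' ((⊤ : Subgroup G).lowerCentralSeries (k + 1)))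
              ((⊤ : Subgroup G).lowerCentralSeries k))),
         (∀ (Ψ : r.ker) (g : G),
            (θ Ψ (QuotientGroup.mk g) : G ⧸ (⊤ : Subgroup G).lowerCentralSeries (k + 1))
              = (Ψ : MulAut (G ⧸ (⊤ : Subgroup G).lowerCentralSeries (k + 1))) (QuotientGroup.mk g)
                  * (QuotientGroup.mk g)⁻¹) ∧
         (∀ (Ψ Φ : r.ker) (x : G ⧸ (⊤ : Subgroup G).lowerCentralSeries 1),
            θ (Ψ * Φ) x = θ Ψ x * θ Φ x))) := by
  set N := (⊤ : Subgroup G).lowerCentralSeries (k + 1)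
  set A := Subgroup.map (QuotientGroup.mk' N) ((⊤ : Subgroup G).lowerCentralSeries k)
  have hA : A = (⊤ : Subgroup (G ⧸ N)).lowerCentralSeries k :=
    map_top_lowerCentralSeries_of_surjective (QuotientGroup.mk'_surjective N) k
  have hA_center : A ≤ center (G ⧸ N) :=
    hA ▸ commutator_top_right_eq_bot_iff_le_center.mp (top_lowerCentralSeries_quotient (k + 1))
  have hA_commutator : A ≤ commutator (G ⧸ N) := hA ▸ Subgroup.lowerCentralSeries_antitone _ hk
  have hN : N ≤ (⊤ : Subgroup G).lowerCentralSeries 1 :=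
    Subgroup.lowerCentralSeries_antitone _ (by omega)
  refine ⟨hA, ⟨MulAut.quotient _, MulAut.quotient_apply_mk, fun r hr => MulAut.eq_quotient hr⟩,
    fun r hr => ?_⟩
  obtain rfl := MulAut.eq_quotient hr
  have hker : (MulAut.quotient ((⊤ : Subgroup (G ⧸ N)).lowerCentralSeries k)).ker =
      MulAut.fixQuotient A := by
    rw [MulAut.ker_quotient, hA]
  refine ⟨fun Ψ Φ hΨ hΦ => MulAut.mul_comm_of_mem_fixQuotient hA_center hA_commutator
    (hker ▸ hΨ) (hker ▸ hΦ), ?_⟩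
  refine ⟨(MulEquiv.subgroupCongr hker).toEquiv.trans <|
    (MulAut.fixQuotientEquivHom hA_center hA_commutator).trans <|
    QuotientGroup.homEquivOfLeCommutator hA_center hN le_rfl, fun Ψ g => rfl, fun Ψ Φ x => ?_⟩
  induction x using QuotientGroup.induction_on with
  | H g =>
    exact MulAut.displacement_mul hA_center hA_commutator
      (MulEquiv.subgroupCongr hker Ψ) (MulEquiv.subgroupCongr hker Φ) g
end

section
/- Let F be a free group of finite rank and let k ≥ 1. Then the natural group homomorphism Aut(F/Γ_{k+2}F) → Aut(F/Γ_{k+1}F), induced by the canonical projection F/Γ_{k+2}F → F/Γ_{k+1}F, is surjective: every automorphism of the free nilpotent group F/Γ_{k+1}F lifts to an automorphism of F/Γ_{k+2}F. -/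
/-!
An automorphism `φ` of `F/Γ_{k+1}F` lifts to an endomorphism of `F` by sending each generator to a
preimage of its image. Every endomorphism of `F` preserves `Γ_{k+2}F`, so it descends to an
endomorphism `e` of `F/Γ_{k+2}F` over `φ`; likewise `e'` over `φ⁻¹`. The composites `e' ∘ e` and
`e ∘ e'` are the identity modulo `Γ_{k+1}F/Γ_{k+2}F`, which for `k ≥ 1` is central and lies in the
derived subgroup. An endomorphism that is the identity modulo the centre fixes every commutator,
so both composites fix that subgroup pointwise, which makes them bijective; hence so is `e`.
-/

open scoped commutatorElement

namespace Subgroup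

theorem map_top_lowerCentralSeries_of_surjective_s7 {G H : Type*} [Group G] [Group H] {f : G →* H}
    (hf : Function.Surjective f) (n : ℕ) :
    ((⊤ : Subgroup G).lowerCentralSeries n).map f = (⊤ : Subgroup H).lowerCentralSeries n := by
  rw [map_lowerCentralSeries, map_top_of_surjective f hf]

theorem top_lowerCentralSeries_le_comap {G H : Type*} [Group G] [Group H] (f : G →* H) (n : ℕ) :
    (⊤ : Subgroup G).lowerCentralSeries n ≤ ((⊤ : Subgroup H).lowerCentralSeries n).comap f := by
  rw [← map_le_iff_le_comap, map_lowerCentralSeries]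
  exact lowerCentralSeries_mono n le_top

theorem top_lowerCentralSeries_quotient_eq_bot (G : Type*) [Group G] (n : ℕ) :
    (⊤ : Subgroup (G ⧸ (⊤ : Subgroup G).lowerCentralSeries n)).lowerCentralSeries n = ⊥ := by
  rw [← map_top_lowerCentralSeries_of_surjective_s7 (QuotientGroup.mk'_surjective _), map_eq_bot_iff,
    QuotientGroup.ker_mk']

end Subgroup

theorem commutatorElement_mul_mem_center {G : Type*} [Group G] (p q : G) {z w : G}
    (hz : z ∈ Subgroup.center G) (hw : w ∈ Subgroup.center G) : ⁅p * z, q * w⁆ = ⁅p, q⁆ := by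
  have hzq : z * (q * w) * z⁻¹ = q * w := by
    rw [← Subgroup.mem_center_iff.mp hz, mul_inv_cancel_right]
  have hwp : w * p⁻¹ * w⁻¹ = p⁻¹ := by
    rw [← Subgroup.mem_center_iff.mp hw, mul_inv_cancel_right]
  calc ⁅p * z, q * w⁆ = p * (z * (q * w) * z⁻¹) * p⁻¹ * (w⁻¹ * q⁻¹) := by group
    _ = p * q * (w * p⁻¹ * w⁻¹) * q⁻¹ := by rw [hzq]; group
    _ = ⁅p, q⁆ := by rw [hwp, commutatorElement_def]

namespace MonoidHom

variable {G : Type*} [Group G]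

theorem commutator_le_eqLocus_id {u : G →* G} (hu : ∀ x, x⁻¹ * u x ∈ Subgroup.center G) :
    commutator G ≤ u.eqLocus (MonoidHom.id G) := by
  rw [commutator_def, Subgroup.commutator_le]
  intro a _ b _
  have hua : u a = a * (a⁻¹ * u a) := (mul_inv_cancel_left a _).symm
  have hub : u b = b * (b⁻¹ * u b) := (mul_inv_cancel_left b _).symm
  change u ⁅a, b⁆ = ⁅a, b⁆
  rw [map_commutatorElement, hua, hub, commutatorElement_mul_mem_center a b (hu a) (hu b)]

theorem bijective_of_forall_inv_mul_mem {u : G →* G} {H : Subgroup G}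
    (hH_center : H ≤ Subgroup.center G) (hH_comm : H ≤ commutator G)
    (hu : ∀ x, x⁻¹ * u x ∈ H) : Function.Bijective u := by
  have hfix : ∀ z ∈ H, u z = z := fun z hz =>
    commutator_le_eqLocus_id (fun x => hH_center (hu x)) (hH_comm hz)
  refine ⟨(injective_iff_map_eq_one u).mpr fun x hx => ?_, fun y => ⟨y * (y⁻¹ * u y)⁻¹, ?_⟩⟩
  · have hx_mem : x ∈ H := by simpa [hx] using H.inv_mem (hu x)
    rw [← hfix x hx_mem, hx]
  · rw [map_mul, map_inv, hfix _ (hu y), mul_inv_rev, inv_inv, mul_inv_cancel_left]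

end MonoidHom

theorem FreeGroup.exists_comp_mk'_eq {α : Type*} (B : Subgroup (FreeGroup α)) [B.Normal]
    (ψ : FreeGroup α ⧸ B →* FreeGroup α ⧸ B) :
    ∃ σ : FreeGroup α →* FreeGroup α, (QuotientGroup.mk' B).comp σ = ψ.comp (QuotientGroup.mk' B) := by
  choose a ha using fun i => QuotientGroup.mk'_surjective B (ψ (QuotientGroup.mk (FreeGroup.of i)))
  exact ⟨FreeGroup.lift a, FreeGroup.ext_hom _ _ fun i => by simpa using ha i⟩

section LowerCentralSeriesProj

variable (G : Type*) [Group G]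

def lowerCentralSeriesProj (k : ℕ) :
    G ⧸ (⊤ : Subgroup G).lowerCentralSeries (k + 1) →* G ⧸ (⊤ : Subgroup G).lowerCentralSeries k :=
  QuotientGroup.map _ _ (MonoidHom.id G)
    (((⊤ : Subgroup G).lowerCentralSeries_antitone k.le_succ).trans_eq (Subgroup.comap_id _).symm)

theorem ker_lowerCentralSeriesProj (k : ℕ) :
    (lowerCentralSeriesProj G k).ker =
      (⊤ : Subgroup (G ⧸ (⊤ : Subgroup G).lowerCentralSeries (k + 1))).lowerCentralSeries k := by
  rw [lowerCentralSeriesProj, QuotientGroup.ker_map, Subgroup.comap_id,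
    Subgroup.map_top_lowerCentralSeries_of_surjective_s7 (QuotientGroup.mk'_surjective _)]

variable {G} in
theorem bijective_of_lowerCentralSeriesProj_comp_eq {k : ℕ} (hk : 1 ≤ k)
    {u : G ⧸ (⊤ : Subgroup G).lowerCentralSeries (k + 1) →*
      G ⧸ (⊤ : Subgroup G).lowerCentralSeries (k + 1)}
    (hu : (lowerCentralSeriesProj G k).comp u = lowerCentralSeriesProj G k) :
    Function.Bijective u := by
  refine MonoidHom.bijective_of_forall_inv_mul_mem
    (Subgroup.commutator_top_right_eq_bot_iff_le_center.mp
      (Subgroup.top_lowerCentralSeries_quotient_eq_bot G (k + 1)))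
    (Subgroup.lowerCentralSeries_antitone _ hk) fun x => ?_
  rw [← ker_lowerCentralSeriesProj, MonoidHom.mem_ker, map_mul, map_inv, ← MonoidHom.comp_apply, hu,
    inv_mul_cancel]

end LowerCentralSeriesProj

theorem FreeGroup.exists_lowerCentralSeriesProj_comp_eq {α : Type*} (k : ℕ)
    (ψ : FreeGroup α ⧸ (⊤ : Subgroup (FreeGroup α)).lowerCentralSeries k →*
      FreeGroup α ⧸ (⊤ : Subgroup (FreeGroup α)).lowerCentralSeries k) :
    ∃ e, (lowerCentralSeriesProj (FreeGroup α) k).comp e = ψ.comp (lowerCentralSeriesProj _ k) := by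
  obtain ⟨σ, hσ⟩ := FreeGroup.exists_comp_mk'_eq _ ψ
  exact ⟨QuotientGroup.map _ _ σ (Subgroup.top_lowerCentralSeries_le_comap σ (k + 1)),
    QuotientGroup.monoidHom_ext _ hσ⟩

/-- Let `F` be a free group of finite rank and `k ≥ 1` (here `Γ_{i+1}F` is
`lowerCentralSeries F i`).  Then the natural group homomorphism
`Aut(F/Γ_{k+2}F) → Aut(F/Γ_{k+1}F)` induced by the canonical projection
`F/Γ_{k+2}F → F/Γ_{k+1}F` is surjective: every automorphism `φ` of the free nilpotent group
`F/Γ_{k+1}F` lifts to an automorphism `Ψ` of `F/Γ_{k+2}F`. -/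
theorem stmt_7 (n : ℕ) (k : ℕ) (hk : 1 ≤ k) :
    ∀ φ : MulAut (FreeGroup (Fin n) ⧸ (⊤ : Subgroup (FreeGroup (Fin n))).lowerCentralSeries k),
      ∃ Ψ : MulAut (FreeGroup (Fin n) ⧸ (⊤ : Subgroup (FreeGroup (Fin n))).lowerCentralSeries (k + 1)),
        ∀ g : FreeGroup (Fin n),
          QuotientGroup.map ((⊤ : Subgroup (FreeGroup (Fin n))).lowerCentralSeries (k + 1))
              ((⊤ : Subgroup (FreeGroup (Fin n))).lowerCentralSeries k) (MonoidHom.id (FreeGroup (Fin n)))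
              (fun x hx => Subgroup.mem_comap.mpr
                ((⊤ : Subgroup (FreeGroup (Fin n))).lowerCentralSeries_antitone (Nat.le_succ k) hx))
              (Ψ (QuotientGroup.mk g))
            = φ (QuotientGroup.mk g) := by
  intro φ
  obtain ⟨e, he⟩ := FreeGroup.exists_lowerCentralSeriesProj_comp_eq k φ.toMonoidHom
  obtain ⟨e', he'⟩ := FreeGroup.exists_lowerCentralSeriesProj_comp_eq k φ.symm.toMonoidHom
  set π := lowerCentralSeriesProj (FreeGroup (Fin n)) k
  have h_e'e : π.comp (e'.comp e) = π := by
    rw [← MonoidHom.comp_assoc, he', MonoidHom.comp_assoc, he, ← MonoidHom.comp_assoc]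
    exact MonoidHom.ext fun x => φ.symm_apply_apply (π x)
  have h_ee' : π.comp (e.comp e') = π := by
    rw [← MonoidHom.comp_assoc, he, MonoidHom.comp_assoc, he', ← MonoidHom.comp_assoc]
    exact MonoidHom.ext fun x => φ.apply_symm_apply (π x)
  have he_bij : Function.Bijective e :=
    ⟨(bijective_of_lowerCentralSeriesProj_comp_eq hk h_e'e).1.of_comp (f := e'),
      (bijective_of_lowerCentralSeriesProj_comp_eq hk h_ee').2.of_comp (g := e')⟩
  exact ⟨MulEquiv.ofBijective e he_bij, fun g => DFunLike.congr_fun he (QuotientGroup.mk g)⟩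
end

section
/- Let G be a group. For each k ≥ 1 define the subset A_k(G) = {φ ∈ Aut(G) : φ(x)·x⁻¹ ∈ Γ_{k+1}G for all x ∈ G} of the automorphism group of G. Then each A_k(G) is a subgroup of Aut(G), the sequence A₁(G) ⊇ A₂(G) ⊇ ⋯ is descending, and [A_k(G), A_l(G)] ⊆ A_{k+l}(G) for all k, l ≥ 1; that is, for φ ∈ A_k(G) and ψ ∈ A_l(G), the commutator φψφ⁻¹ψ⁻¹ satisfies (φψφ⁻¹ψ⁻¹)(x)·x⁻¹ ∈ Γ_{k+l+1}G for all x ∈ G. (This is the N-series property of the Johnson filtration, transported through the Dehn–Nielsen representation.) -/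
/-!
Write `Γ_i` for the lower central series with `Γ_1 = G` (Mathlib's `lowerCentralSeries (i - 1)`),
so that `⁅Γ_i, Γ_j⁆ ≤ Γ_{i+j}` by the three subgroups lemma. If `φ(x) x⁻¹ ∈ Γ_{k+1}` for all `x`, then by induction on `m` also `φ(x) x⁻¹ ∈ Γ_{m+k}`
for `x ∈ Γ_m`: for `g ∈ Γ_m` we have `φ ⁅g, h⁆ = ⁅a g, b h⁆` with `a ∈ Γ_{m+k}` central and
`b ∈ Γ_{k+1}` commuting with `g` and `⁅g, h⁆` modulo `Γ_{m+k+1}`. For `φ ∈ A_k`, `ψ ∈ A_l` write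
`φ y = a y`, `ψ y = b y`; modulo `Γ_{k+l+1}`, `φ` fixes `b ∈ Γ_{l+1}`, `ψ` fixes `a ∈ Γ_{k+1}`, and
`a`, `b` commute, so `φ (ψ y) ≡ b a y ≡ a b y ≡ ψ (φ y)`.
-/

open scoped commutatorElement

namespace Subgroup

variable {G : Type*} [Group G]

/-- The three subgroups lemma modulo `N`. -/
theorem commutator_commutator_le_of_rotate {A B C N : Subgroup G} [N.Normal]
    (h₁ : ⁅⁅B, C⁆, A⁆ ≤ N) (h₂ : ⁅⁅C, A⁆, B⁆ ≤ N) : ⁅⁅A, B⁆, C⁆ ≤ N := by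
  have le_iff_map_eq_bot (X : Subgroup G) : X ≤ N ↔ X.map (QuotientGroup.mk' N) = ⊥ := by
    rw [map_eq_bot_iff, QuotientGroup.ker_mk']
  simp only [le_iff_map_eq_bot, map_commutator] at h₁ h₂ ⊢
  exact commutator_commutator_eq_bot_of_rotate h₁ h₂

theorem commutator_lowerCentralSeries_le (i j : ℕ) :
    ⁅(⊤ : Subgroup G).lowerCentralSeries i, (⊤ : Subgroup G).lowerCentralSeries j⁆ ≤
      (⊤ : Subgroup G).lowerCentralSeries (i + j + 1) := by
  induction j generalizing i with
  | zero => exact le_rfl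
  | succ j ih =>
    rw [lowerCentralSeries_succ, commutator_comm]
    apply commutator_commutator_le_of_rotate
    · rw [commutator_comm ⊤, ← lowerCentralSeries_succ,
        show i + (j + 1) + 1 = i + 1 + j + 1 by omega]
      exact ih (i + 1)
    · exact commutator_mono (ih i) le_rfl

end Subgroup

namespace QuotientGroup

variable {G : Type*} [Group G] {N : Subgroup G} [N.Normal]

theorem commute_mk_of_commutatorElement_mem {x y : G} (h : ⁅x, y⁆ ∈ N) :
    Commute (x : G ⧸ N) (y : G ⧸ N) := by
  rw [← commutatorElement_eq_one_iff_commute, ← mk'_apply, ← mk'_apply,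
    ← map_commutatorElement, mk'_apply, eq_one_iff]
  exact h

theorem mk_eq_mk_iff_mul_inv_mem {x y : G} : (x : G ⧸ N) = y ↔ x * y⁻¹ ∈ N := by
  rw [eq_iff_div_mem, div_eq_mul_inv]

end QuotientGroup

theorem commutatorElement_mul_mul_eq {G : Type*} [Group G] {a b g h : G}
    (ha : ∀ y, Commute a y) (hb : Commute g b) (hb' : Commute b ⁅g, h⁆) :
    ⁅a * g, b * h⁆ = ⁅g, h⁆ := by
  rw [commutatorElement_mul_left_eq_conj_mul, (ha _).commutator_eq, mul_one,
    (ha _).mul_inv_cancel, commutatorElement_mul_right_eq_mul_conj,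
    hb.commutator_eq, one_mul, hb'.mul_inv_cancel]

namespace MulAut

variable {G : Type*} [Group G]

/-- For `N = Γ_{k+1} G` this is `A_k(G)`. -/
def trivialModulo (N : Subgroup G) [N.Normal] : Subgroup (MulAut G) where
  carrier := {φ | ∀ x, (φ x : G ⧸ N) = x}
  one_mem' _ := rfl
  mul_mem' hφ hψ x := (hφ _).trans (hψ x)
  inv_mem' {φ} hφ x := by simpa using (hφ (φ⁻¹ x)).symm

def fixingModulo (φ : MulAut G) (N : Subgroup G) [N.Normal] : Subgroup G :=
  ((QuotientGroup.mk' N).comp φ.toMonoidHom).eqLocus (QuotientGroup.mk' N)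

variable {φ ψ : MulAut G} {H K L M N : Subgroup G} [K.Normal] [L.Normal] [M.Normal] [N.Normal]

theorem mem_trivialModulo : φ ∈ trivialModulo N ↔ ∀ x, φ x * x⁻¹ ∈ N :=
  forall_congr' fun _ ↦ QuotientGroup.mk_eq_mk_iff_mul_inv_mem

theorem trivialModulo_mono (h : M ≤ N) : trivialModulo M ≤ trivialModulo N :=
  fun _ hφ ↦ mem_trivialModulo.2 fun x ↦ h (mem_trivialModulo.1 hφ x)

theorem mem_fixingModulo {x : G} : x ∈ fixingModulo φ N ↔ φ x * x⁻¹ ∈ N :=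
  QuotientGroup.mk_eq_mk_iff_mul_inv_mem

/-- `φ ⁅g, h⁆ = ⁅a * g, b * h⁆` with `a ∈ M` central modulo `N` and `b ∈ K` commuting with `g` and
`⁅g, h⁆` modulo `N`. -/
theorem commutator_top_le_fixingModulo (hφ : φ ∈ trivialModulo K) (hH : H ≤ fixingModulo φ M)
    (hM : ⁅M, ⊤⁆ ≤ N) (hHK : ⁅H, K⁆ ≤ N) (hKH : ⁅K, ⁅H, ⊤⁆⁆ ≤ N) :
    ⁅H, ⊤⁆ ≤ fixingModulo φ N := by
  rw [Subgroup.commutator_le]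
  intro g hg h _
  set a := φ g * g⁻¹
  set b := φ h * h⁻¹
  have ha : a ∈ M := mem_fixingModulo.1 (hH hg)
  have hb : b ∈ K := mem_trivialModulo.1 hφ h
  have hφ_comm : φ ⁅g, h⁆ = ⁅a * g, b * h⁆ := by
    simp only [a, b, map_commutatorElement, inv_mul_cancel_right]
  have a_central (y : G ⧸ N) : Commute (a : G ⧸ N) y := by
    induction y using QuotientGroup.induction_on with | H y =>
    exact QuotientGroup.commute_mk_of_commutatorElement_mem
      (hM (Subgroup.commutator_mem_commutator ha (Subgroup.mem_top y)))
  have g_comm_b := QuotientGroup.commute_mk_of_commutatorElement_mem (N := N)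
    (hHK (Subgroup.commutator_mem_commutator hg hb))
  have b_comm_gh := QuotientGroup.commute_mk_of_commutatorElement_mem (N := N)
    (hKH (Subgroup.commutator_mem_commutator hb
      (Subgroup.commutator_mem_commutator hg (Subgroup.mem_top h))))
  change ((φ ⁅g, h⁆ : G) : G ⧸ N) = ((⁅g, h⁆ : G) : G ⧸ N)
  simp only [hφ_comm, ← QuotientGroup.mk'_apply, map_commutatorElement, map_mul] at b_comm_gh ⊢
  exact commutatorElement_mul_mul_eq a_central g_comm_b b_comm_gh

theorem commutatorElement_mem_trivialModulo (hφ : φ ∈ trivialModulo K) (hψ : ψ ∈ trivialModulo L)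
    (hφL : L ≤ fixingModulo φ N) (hψK : K ≤ fixingModulo ψ N) (hKL : ⁅K, L⁆ ≤ N) :
    ⁅φ, ψ⁆ ∈ trivialModulo N := by
  suffices h : ∀ y, ((φ (ψ y) : G) : G ⧸ N) = ((ψ (φ y) : G) : G ⧸ N) by
    intro x
    simpa [commutatorElement_def] using h (φ⁻¹ (ψ⁻¹ x))
  intro y
  obtain ⟨a, ha, hφy⟩ : ∃ a ∈ K, φ y = a * y :=
    ⟨_, mem_trivialModulo.1 hφ y, (inv_mul_cancel_right _ _).symm⟩
  obtain ⟨b, hb, hψy⟩ : ∃ b ∈ L, ψ y = b * y :=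
    ⟨_, mem_trivialModulo.1 hψ y, (inv_mul_cancel_right _ _).symm⟩
  have hφb : ((φ b : G) : G ⧸ N) = b := hφL hb
  have hψa : ((ψ a : G) : G ⧸ N) = a := hψK ha
  have a_comm_b := QuotientGroup.commute_mk_of_commutatorElement_mem (N := N)
    (hKL (Subgroup.commutator_mem_commutator ha hb))
  calc ((φ (ψ y) : G) : G ⧸ N) = b * (a * y) := by
        rw [hψy, map_mul, QuotientGroup.mk_mul, hφb, hφy, QuotientGroup.mk_mul]
    _ = a * (b * y) := by rw [← mul_assoc, ← mul_assoc, a_comm_b.eq]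
    _ = ((ψ (φ y) : G) : G ⧸ N) := by
        rw [hφy, map_mul, QuotientGroup.mk_mul, hψa, hψy, QuotientGroup.mk_mul]

theorem lowerCentralSeries_le_fixingModulo {k : ℕ}
    (hφ : φ ∈ trivialModulo ((⊤ : Subgroup G).lowerCentralSeries k)) (m : ℕ) :
    (⊤ : Subgroup G).lowerCentralSeries m ≤
      fixingModulo φ ((⊤ : Subgroup G).lowerCentralSeries (m + k)) := by
  induction m with
  | zero => rw [zero_add]; exact fun x _ ↦ hφ x
  | succ m ih =>
    rw [show m + 1 + k = m + k + 1 by omega]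
    exact commutator_top_le_fixingModulo hφ ih le_rfl
      (Subgroup.commutator_lowerCentralSeries_le m k)
      ((Subgroup.commutator_lowerCentralSeries_le k (m + 1)).trans
        (Subgroup.lowerCentralSeries_antitone _ (by omega)))

end MulAut

/-- Let `G` be a group.  For each `k ≥ 1` consider the subset
`A_k(G) = {φ ∈ Aut(G) : φ(x)·x⁻¹ ∈ Γ_{k+1}G for all x}` of the automorphism group of `G`
(here `Γ_{k+1}G` is `lowerCentralSeries G k`).  Then each `A_k(G)` is a subgroup of `Aut(G)`
(it contains the identity and is closed under composition and inverses), the sequence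
`A₁(G) ⊇ A₂(G) ⊇ ⋯` is descending, and `[A_k(G), A_l(G)] ⊆ A_{k+l}(G)`: for `φ ∈ A_k(G)` and
`ψ ∈ A_l(G)`, the commutator `φψφ⁻¹ψ⁻¹` satisfies `(φψφ⁻¹ψ⁻¹)(x)·x⁻¹ ∈ Γ_{k+l+1}G` for all
`x`. -/
theorem stmt_10 (G : Type*) [Group G] :
    ∀ k l : ℕ, 1 ≤ k → 1 ≤ l →
      ((∀ x : G, (1 : MulAut G) x * x⁻¹ ∈ (⊤ : Subgroup G).lowerCentralSeries k) ∧
       (∀ φ ψ : MulAut G,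
          (∀ x : G, φ x * x⁻¹ ∈ (⊤ : Subgroup G).lowerCentralSeries k) →
          (∀ x : G, ψ x * x⁻¹ ∈ (⊤ : Subgroup G).lowerCentralSeries k) →
          ∀ x : G, (φ * ψ) x * x⁻¹ ∈ (⊤ : Subgroup G).lowerCentralSeries k) ∧
       (∀ φ : MulAut G,
          (∀ x : G, φ x * x⁻¹ ∈ (⊤ : Subgroup G).lowerCentralSeries k) →
          ∀ x : G, φ⁻¹ x * x⁻¹ ∈ (⊤ : Subgroup G).lowerCentralSeries k)) ∧
      (∀ φ : MulAut G,
        (∀ x : G, φ x * x⁻¹ ∈ (⊤ : Subgroup G).lowerCentralSeries (k + 1)) →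
        ∀ x : G, φ x * x⁻¹ ∈ (⊤ : Subgroup G).lowerCentralSeries k) ∧
      (∀ φ ψ : MulAut G,
        (∀ x : G, φ x * x⁻¹ ∈ (⊤ : Subgroup G).lowerCentralSeries k) →
        (∀ x : G, ψ x * x⁻¹ ∈ (⊤ : Subgroup G).lowerCentralSeries l) →
        ∀ x : G, (φ * ψ * φ⁻¹ * ψ⁻¹) x * x⁻¹ ∈ (⊤ : Subgroup G).lowerCentralSeries (k + l)) := by
  intro k l _ _
  simp only [← MulAut.mem_trivialModulo, ← commutatorElement_def]
  refine ⟨⟨one_mem _, fun _ _ ↦ mul_mem, fun _ ↦ inv_mem⟩, ?_, fun φ ψ hφ hψ ↦ ?_⟩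
  · exact fun _ ↦ (MulAut.trivialModulo_mono (Subgroup.lowerCentralSeries_antitone _ k.le_succ) ·)
  · refine MulAut.commutatorElement_mem_trivialModulo hφ hψ ?_ ?_
      ((Subgroup.commutator_lowerCentralSeries_le k l).trans
        (Subgroup.lowerCentralSeries_antitone _ (by omega)))
    · simpa only [Nat.add_comm l k] using MulAut.lowerCentralSeries_le_fixingModulo hφ l
    · exact MulAut.lowerCentralSeries_le_fixingModulo hψ k
end
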